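/- arXiv:2503.20923 — 3 statements merged into one kernel-verified Lean document; each statement's English description precedes it below -/
import Mathlib

section
/- Suppose the immigration generating function satisfies 1 - g(f^{∘n}(0)) = (1 + ε(n))·δ/n for a sequence ε(n) → 0, where δ ∈ (0,∞) and 0 < g(f^{∘i}(0)) < 1 for all i. Then there exists a function ℓ*: ℕ → (0,∞), slowly varying at infinity, such that ∏_{0 ≤ i < n} g(f^{∘i}(0)) ∼ ℓ*(n)·n^{-δ} as n → ∞. -/
/-!
Take `ℓ*(n) = exp (∑_{i<n} log aᵢ + δ log n)` with `aᵢ = g(f^{∘i}(0))`; then the product equals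
`ℓ*(n) n^{-δ}` exactly for `n ≥ 1`, and slow variation amounts to
`∑_{n ≤ i < ⌊λn⌋} log aᵢ → -δ log λ`. The hypothesis gives `i log aᵢ → -δ`. Subtracting
`-δ/(i+1)` leaves terms `cᵢ` with `i cᵢ → 0`, and a sum of such terms over `[n, λn)` is at most
`sup_{i ≥ n} |i cᵢ|` times a bounded ratio, so it vanishes in the limit; the harmonic part
contributes `log λ` by `Hₙ - log n → γ`.
-/

open Filter Finset Real Asymptotics Topology

theorem tendsto_natFloor_mul_atTop {l : ℝ} (hl : 0 < l) :
    Tendsto (fun n : ℕ => ⌊l * n⌋₊) atTop atTop :=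
  tendsto_nat_floor_atTop.comp (tendsto_natCast_atTop_atTop.const_mul_atTop hl)

theorem tendsto_natFloor_mul_div_natCast {l : ℝ} (hl : 0 ≤ l) :
    Tendsto (fun n : ℕ => (⌊l * n⌋₊ : ℝ) / n) atTop (𝓝 l) :=
  (tendsto_nat_floor_mul_div_atTop hl).comp tendsto_natCast_atTop_atTop

theorem tendsto_log_natFloor_mul_sub_log {l : ℝ} (hl : 0 < l) :
    Tendsto (fun n : ℕ => log ⌊l * n⌋₊ - log n) atTop (𝓝 (log l)) := by
  refine ((continuousAt_log hl.ne').tendsto.comp (tendsto_natFloor_mul_div_natCast hl.le)).congr' ?_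
  filter_upwards [eventually_gt_atTop 0, (tendsto_natFloor_mul_atTop hl).eventually_gt_atTop 0]
    with n hn hm
  exact log_div (by positivity) (by positivity)

theorem abs_sum_Ico_le_of_abs_mul_le {c : ℕ → ℝ} {ε : ℝ} {n m : ℕ} (hn : 0 < n)
    (hc : ∀ i, n ≤ i → |i * c i| ≤ ε) : |∑ i ∈ Ico n m, c i| ≤ ε * (m / n) := by
  have hε : 0 ≤ ε := (abs_nonneg _).trans (hc n le_rfl)
  have hterm : ∀ i ∈ Ico n m, |c i| ≤ ε / n := by
    intro i hi
    have hni : n ≤ i := (mem_Ico.1 hi).1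
    have hi : (0 : ℝ) < i := by exact_mod_cast hn.trans_le hni
    calc |c i| = |i * c i| / i := by rw [abs_mul, abs_of_pos hi, mul_div_cancel_left₀ _ hi.ne']
      _ ≤ ε / i := by gcongr; exact hc i hni
      _ ≤ ε / n := by gcongr
  calc |∑ i ∈ Ico n m, c i| ≤ ∑ i ∈ Ico n m, |c i| := abs_sum_le_sum_abs _ _
    _ ≤ (m - n : ℕ) * (ε / n) := by
        simpa [Nat.card_Ico] using sum_le_sum hterm
    _ ≤ m * (ε / n) := by gcongr; exact_mod_cast Nat.sub_le m n
    _ = ε * (m / n) := by ring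

theorem abs_sum_range_sub_sum_range_le {c : ℕ → ℝ} {ε : ℝ} {N n m : ℕ} (hN : 0 < N)
    (hc : ∀ i, N ≤ i → |i * c i| ≤ ε) (hn : N ≤ n) (hm : N ≤ m) :
    |∑ i ∈ range m, c i - ∑ i ∈ range n, c i| ≤ ε * (m / n + n / m) := by
  have hε : 0 ≤ ε := (abs_nonneg _).trans (hc N le_rfl)
  rcases le_total n m with hnm | hmn
  · rw [← sum_Ico_eq_sub _ hnm]
    calc _ ≤ ε * (m / n) :=
          abs_sum_Ico_le_of_abs_mul_le (hN.trans_le hn) fun i hi => hc i (hn.trans hi)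
      _ ≤ ε * (m / n + n / m) := by gcongr; exact le_add_of_nonneg_right (by positivity)
  · rw [abs_sub_comm, ← sum_Ico_eq_sub _ hmn]
    calc _ ≤ ε * (n / m) :=
          abs_sum_Ico_le_of_abs_mul_le (hN.trans_le hm) fun i hi => hc i (hm.trans hi)
      _ ≤ ε * (m / n + n / m) := by gcongr; exact le_add_of_nonneg_left (by positivity)

theorem tendsto_sum_range_natFloor_mul_sub_of_tendsto_mul_zero {c : ℕ → ℝ}
    (hc : Tendsto (fun i : ℕ => i * c i) atTop (𝓝 0)) {l : ℝ} (hl : 0 < l) :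
    Tendsto (fun n : ℕ => ∑ i ∈ range ⌊l * n⌋₊, c i - ∑ i ∈ range n, c i) atTop (𝓝 0) := by
  set K := l + l⁻¹ + 1
  have hK : 0 < K := by positivity
  have hratio : ∀ᶠ n : ℕ in atTop, (⌊l * n⌋₊ : ℝ) / n + n / ⌊l * n⌋₊ ≤ K := by
    have hm := tendsto_natFloor_mul_div_natCast hl.le
    have := (hm.add (hm.inv₀ hl.ne')).eventually (ge_mem_nhds (lt_add_one (l + l⁻¹)))
    simpa only [inv_div] using this
  refine Metric.nhds_basis_closedBall.tendsto_right_iff.2 fun ρ hρ => ?_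
  obtain ⟨N, hN⟩ := eventually_atTop.1 <|
    Metric.nhds_basis_closedBall.tendsto_right_iff.1 hc (ρ / K) (by positivity)
  filter_upwards [hratio, eventually_ge_atTop (max N 1),
    (tendsto_natFloor_mul_atTop hl).eventually_ge_atTop (max N 1)] with n hr hn hm
  have hsmall : ∀ i, max N 1 ≤ i → |i * c i| ≤ ρ / K := fun i hi => by
    simpa using hN i (le_of_max_le_left hi)
  rw [Metric.mem_closedBall, dist_zero_right, norm_eq_abs]
  calc _ ≤ ρ / K * ((⌊l * n⌋₊ : ℝ) / n + n / ⌊l * n⌋₊) :=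
        abs_sum_range_sub_sum_range_le (by positivity) hsmall hn hm
    _ ≤ ρ / K * K := by gcongr
    _ = ρ := div_mul_cancel₀ ρ hK.ne'

theorem tendsto_sum_range_natFloor_mul_sub_of_tendsto_mul {b : ℕ → ℝ} {β : ℝ}
    (hb : Tendsto (fun i : ℕ => i * b i) atTop (𝓝 β)) {l : ℝ} (hl : 0 < l) :
    Tendsto (fun n : ℕ => ∑ i ∈ range ⌊l * n⌋₊, b i - ∑ i ∈ range n, b i) atTop
      (𝓝 (β * log l)) := by
  set c : ℕ → ℝ := fun i => b i - β / (i + 1)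
  have hc : Tendsto (fun i : ℕ => i * c i) atTop (𝓝 0) := by
    have := hb.sub ((tendsto_natCast_div_add_atTop (1 : ℝ)).const_mul β)
    rw [mul_one, sub_self] at this
    refine this.congr fun i => ?_
    simp only [c]
    ring
  have hsum : ∀ n, ∑ i ∈ range n, b i = ∑ i ∈ range n, c i + β * harmonic n := by
    intro n
    simp [c, harmonic, mul_sum, div_eq_mul_inv]
  have hm := tendsto_natFloor_mul_atTop hl
  have := (tendsto_sum_range_natFloor_mul_sub_of_tendsto_mul_zero hc hl).add
    (Tendsto.const_mul β (((tendsto_harmonic_sub_log.comp hm).sub tendsto_harmonic_sub_log).add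
      (tendsto_log_natFloor_mul_sub_log hl)))
  rw [sub_self, zero_add, zero_add] at this
  refine this.congr fun n => ?_
  simp only [hsum, Function.comp_apply]
  ring

theorem isLittleO_log_one_sub_add_self : (fun x : ℝ => log (1 - x) + x) =o[𝓝 0] fun x => x := by
  have hderiv : HasDerivAt (fun x : ℝ => log (1 - x)) (-1) 0 := by
    simpa using ((hasDerivAt_id (0 : ℝ)).const_sub 1).log (by norm_num)
  simpa using hderiv.isLittleO

theorem tendsto_mul_log_of_tendsto_mul_one_sub {a : ℕ → ℝ} {δ : ℝ}
    (ha : Tendsto (fun i : ℕ => i * (1 - a i)) atTop (𝓝 δ)) :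
    Tendsto (fun i : ℕ => i * log (a i)) atTop (𝓝 (-δ)) := by
  have hx : Tendsto (fun i => 1 - a i) atTop (𝓝 0) := by
    have := ha.mul (tendsto_inv_atTop_zero.comp (tendsto_natCast_atTop_atTop (R := ℝ)))
    rw [mul_zero] at this
    refine this.congr' ?_
    filter_upwards [eventually_ne_atTop 0] with i hi
    simp [mul_comm, hi]
  have hrem : Tendsto (fun i : ℕ => i * (log (a i) + (1 - a i))) atTop (𝓝 0) := by
    have hlog : (fun i => log (a i) + (1 - a i)) =o[atTop] fun i => 1 - a i := by
      simpa [Function.comp_def] using isLittleO_log_one_sub_add_self.comp_tendsto hx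
    exact (isLittleO_one_iff ℝ).1 <|
      ((isBigO_refl (fun i : ℕ => (i : ℝ)) atTop).mul_isLittleO hlog).trans_isBigO
        (ha.isBigO_one ℝ)
  simpa [mul_add] using hrem.sub ha

theorem slowly_varying_product_asymptotics_general
    (f g : ℝ → ℝ) (δ : ℝ)
    (hbound : ∀ i : ℕ, 0 < g (f^[i] 0) ∧ g (f^[i] 0) < 1)
    (ε : ℕ → ℝ) (hε : Tendsto ε atTop (nhds 0))
    (heq : ∀ n : ℕ, 1 ≤ n → 1 - g (f^[n] 0) = (1 + ε n) * δ / (n : ℝ)) :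
    ∃ L : ℕ → ℝ, (∀ n, 0 < L n) ∧
      (∀ l : ℝ, 0 < l →
        Tendsto (fun n : ℕ => L ⌊l * (n : ℝ)⌋₊ / L n) atTop (nhds 1)) ∧
      Tendsto (fun n : ℕ =>
          (∏ i ∈ Finset.range n, g (f^[i] 0)) / (L n * (n : ℝ) ^ (-δ)))
        atTop (nhds 1) := by
  set a : ℕ → ℝ := fun i => g (f^[i] 0)
  have hmul : Tendsto (fun i : ℕ => i * (1 - a i)) atTop (𝓝 δ) := by
    have := (tendsto_const_nhds (x := (1 : ℝ)).add hε).mul_const δ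
    rw [add_zero, one_mul] at this
    refine this.congr' ?_
    filter_upwards [eventually_ne_atTop 0] with i hi
    rw [heq i (Nat.one_le_iff_ne_zero.2 hi), mul_div_cancel₀ _ (Nat.cast_ne_zero.2 hi)]
  set T : ℕ → ℝ := fun n => ∑ i ∈ range n, log (a i) + δ * log n
  refine ⟨fun n => exp (T n), fun n => exp_pos _, fun l hl => ?_, ?_⟩
  · have hT := (tendsto_sum_range_natFloor_mul_sub_of_tendsto_mul
      (tendsto_mul_log_of_tendsto_mul_one_sub hmul) hl).add
      ((tendsto_log_natFloor_mul_sub_log hl).const_mul δ)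
    rw [neg_mul, neg_add_cancel] at hT
    simpa [Function.comp_def, ← exp_sub, T, add_sub_add_comm, mul_sub] using
      (continuous_exp.tendsto 0).comp hT
  · refine tendsto_const_nhds.congr' ?_
    filter_upwards [eventually_gt_atTop 0] with n hn
    have hprod : ∏ i ∈ range n, a i = exp (∑ i ∈ range n, log (a i)) := by
      rw [exp_sum]
      exact prod_congr rfl fun i _ => (exp_log (hbound i).1).symm
    rw [hprod, rpow_def_of_pos (by positivity), ← exp_add, eq_comm,
      div_eq_one_iff_eq (exp_pos _).ne']
    congr 1
    ring

/-- If `1 - g(f^{∘n}(0)) = (1 + ε(n))·δ/n` with `ε(n) → 0`, `δ > 0` and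
`0 < g(f^{∘i}(0)) < 1`, then there is a slowly varying `ℓ*` with
`∏_{0 ≤ i < n} g(f^{∘i}(0)) ∼ ℓ*(n) n^{-δ}`. -/
theorem slowly_varying_product_asymptotics
    (f g : ℝ → ℝ) (δ : ℝ) (hδ : 0 < δ)
    (hiter : ∀ i : ℕ, f^[i] 0 ∈ Set.Ico (0:ℝ) 1)
    (hmono : Monotone fun i : ℕ => f^[i] 0)
    (htend : Tendsto (fun i : ℕ => f^[i] 0) atTop (nhds 1))
    (hbound : ∀ i : ℕ, 0 < g (f^[i] 0) ∧ g (f^[i] 0) < 1)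
    (ε : ℕ → ℝ) (hε : Tendsto ε atTop (nhds 0))
    (heq : ∀ n : ℕ, 1 ≤ n → 1 - g (f^[n] 0) = (1 + ε n) * δ / (n : ℝ)) :
    ∃ L : ℕ → ℝ, (∀ n, 0 < L n) ∧
      (∀ l : ℝ, 0 < l →
        Tendsto (fun n : ℕ => L ⌊l * (n : ℝ)⌋₊ / L n) atTop (nhds 1)) ∧
      Tendsto (fun n : ℕ =>
          (∏ i ∈ Finset.range n, g (f^[i] 0)) / (L n * (n : ℝ) ^ (-δ)))
        atTop (nhds 1) :=
  slowly_varying_product_asymptotics_general f g δ hbound ε hε heq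
end

section
/- Let E be a metric space, O ⊂ E open with closure C, and f_n → f in the Skorokhod J₁ topology on càdlàg paths [0,∞) → E. If T_O(f) ≤ min{T_C(f), T_C⁻(f)}, T_O(f) < ∞, and f(T_O(f)) = f(T_O(f)−), then T_O(f_n) < ∞ for all sufficiently large n and (T_O(f_n), f_n(T_O(f_n))) → (T_O(f), f(T_O(f))) in [0,∞) × E. -/
/-
Fix a continuity time `T > T_O(f)` of `f` (càdlàg paths have only countably many jumps) and
time changes `λₙ` of `[0, T]` with `λₙ → id` and `fₙ - f ∘ λₙ → 0` uniformly on `[0, T]`.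
Upper bound: `f` enters the open set `O` at some time `s < T_O(f) + ε`, and `fₙ` is in `O` at the
time `λₙ⁻¹(s)`, which is close to `s`. Lower bound: if `fₙ` entered `O` before a fixed
`c < T_O(f)` along a subsequence, a limit point `σ ≤ c` of the corresponding times `λₙ(tₙ)` would
have `f(σ)` or `f(σ-)` in `C`, contradicting `T_O(f) ≤ min (T_C(f), T_C⁻(f))`. Finally `f` is
continuous at `T_O(f)`, so `fₙ(T_O(fₙ))`, which is close to `f(λₙ(T_O(fₙ)))`, tends to
`f(T_O(f))`.
-/

open Filter Set

/-- First entrance time into `U` of a path `f : [0,∞) → E`, valued in `[0,∞]`. -/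
noncomputable def hitTime {E : Type*} (f : ℝ → E) (U : Set E) : ENNReal :=
  sInf (ENNReal.ofReal '' {t : ℝ | 0 ≤ t ∧ f t ∈ U})

open Metric Bornology Topology

section HitTime

variable {E : Type*} {f : ℝ → E} {U : Set E}

lemma hitTime_le_ofReal {t : ℝ} (ht : 0 ≤ t) (hU : f t ∈ U) :
    hitTime f U ≤ ENNReal.ofReal t :=
  sInf_le ⟨t, ⟨ht, hU⟩, rfl⟩

lemma exists_lt_of_hitTime_lt {x : ENNReal} (h : hitTime f U < x) :
    ∃ t : ℝ, 0 ≤ t ∧ f t ∈ U ∧ ENNReal.ofReal t < x := by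
  obtain ⟨_, ⟨t, ⟨ht, hU⟩, rfl⟩, htx⟩ := sInf_lt_iff.1 h
  exact ⟨t, ht, hU, htx⟩

end HitTime

lemma eventually_nhdsWithin_Ici_zero {p : ℝ → Prop} {x : ℝ} (hx : 0 ≤ x)
    (hl : 0 < x → ∀ᶠ y in 𝓝[<] x, p y) (hr : ∀ᶠ y in 𝓝[≥] x, p y) :
    ∀ᶠ y in 𝓝[Ici 0] x, p y := by
  rcases hx.eq_or_lt with rfl | hx
  · exact hr
  · rw [nhdsWithin_eq_nhds.2 (Ici_mem_nhds hx), ← nhdsLT_sup_nhdsGE]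
    exact eventually_sup.2 ⟨hl hx, hr⟩

lemma continuousWithinAt_Ici_zero {E : Type*} [TopologicalSpace E] {f : ℝ → E} {x : ℝ}
    (hx : 0 ≤ x) (hr : ContinuousWithinAt f (Ici x) x)
    (hl : 0 < x → Tendsto f (𝓝[<] x) (𝓝 (f x))) :
    ContinuousWithinAt f (Ici 0) x :=
  fun _ hV => eventually_nhdsWithin_Ici_zero hx (fun h => hl h hV) (hr hV)

section Cadlag

variable {E : Type*} [PseudoMetricSpace E]

lemma isBounded_image_Icc_of_cadlag {g : ℝ → E}
    (hr : ∀ t : ℝ, 0 ≤ t → ContinuousWithinAt g (Ici t) t)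
    (hl : ∀ t : ℝ, 0 < t → ∃ y : E, Tendsto g (𝓝[<] t) (𝓝 y)) (T : ℝ) :
    IsBounded (g '' Icc 0 T) := by
  refine isCompact_Icc.induction_on (p := fun s => IsBounded (g '' s)) (by simp)
    (fun s t hst ht => ht.subset (image_mono hst))
    (fun s t hs ht => by rw [image_union]; exact hs.union ht) fun x hx => ?_
  obtain ⟨y, hy⟩ : ∃ y : E, 0 < x → Tendsto g (𝓝[<] x) (𝓝 y) := by
    by_cases h : 0 < x
    · exact (hl x h).imp fun _ hy _ => hy
    · exact ⟨g x, fun h' => absurd h' h⟩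
  have hB : ∀ᶠ t in 𝓝[Ici 0] x, g t ∈ ball y 1 ∪ ball (g x) 1 :=
    eventually_nhdsWithin_Ici_zero hx.1
      (fun h => ((hy h).eventually (ball_mem_nhds _ one_pos)).mono fun _ => Or.inl)
      (((hr x hx.1).eventually (ball_mem_nhds _ one_pos)).mono fun _ => Or.inr)
  exact ⟨_, nhdsWithin_mono _ Icc_subset_Ici_self hB,
    (isBounded_ball.union isBounded_ball).subset (image_preimage_subset _ _)⟩

lemma eventually_nhdsGT_dist_lt {f fl : ℝ → E}
    (hf_r : ∀ t : ℝ, 0 ≤ t → ContinuousWithinAt f (Ici t) t)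
    (hf_l : ∀ t : ℝ, 0 < t → Tendsto f (𝓝[<] t) (𝓝 (fl t))) {x ε : ℝ} (hx : 0 ≤ x)
    (hε : 0 < ε) : ∀ᶠ y in 𝓝[>] x, dist (f y) (fl y) < ε := by
  obtain ⟨d, hxd, hd⟩ := (mem_nhdsGE_iff_exists_Ico_subset' (lt_add_one x)).1
    ((hf_r x hx).eventually (ball_mem_nhds (f x) (half_pos hε)))
  filter_upwards [Ioo_mem_nhdsGT hxd] with y hy
  -- `f(y-)` is a limit of values of `f` on `(x, y)`, all `ε/2`-close to `f x`
  have hfly : dist (fl y) (f x) ≤ ε / 2 :=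
    le_of_tendsto ((hf_l y (hx.trans_lt hy.1)).dist tendsto_const_nhds)
      (mem_of_superset (Ioo_mem_nhdsLT hy.1) fun z hz =>
        (show dist (f z) (f x) < ε / 2 from hd ⟨hz.1.le, hz.2.trans hy.2⟩).le)
  calc dist (f y) (fl y) ≤ dist (f y) (f x) + dist (fl y) (f x) := dist_triangle_right _ _ _
    _ < ε / 2 + ε / 2 := add_lt_add_of_lt_of_le (hd ⟨hy.1.le, hy.2⟩) hfly
    _ = ε := add_halves ε

lemma countable_setOf_le_dist_leftLim {f fl : ℝ → E}
    (hf_r : ∀ t : ℝ, 0 ≤ t → ContinuousWithinAt f (Ici t) t)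
    (hf_l : ∀ t : ℝ, 0 < t → Tendsto f (𝓝[<] t) (𝓝 (fl t))) {ε : ℝ} (hε : 0 < ε) :
    {x : ℝ | 0 ≤ x ∧ ε ≤ dist (f x) (fl x)}.Countable := by
  refine (countable_setOfPred_isolated_right_within
    (s := {x : ℝ | 0 ≤ x ∧ ε ≤ dist (f x) (fl x)})).mono fun x hx => mem_sep hx ?_
  rw [← eventually_false_iff_eq_bot]
  filter_upwards [nhdsWithin_mono x inter_subset_right
      (eventually_nhdsGT_dist_lt hf_r hf_l hx.1 hε), self_mem_nhdsWithin] with y hy hyS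
  exact not_lt_of_ge hyS.1.2 hy

lemma hitTime_le_of_tendsto {f fl : ℝ → E}
    (hf_r : ∀ t : ℝ, 0 ≤ t → ContinuousWithinAt f (Ici t) t)
    (hf_l : ∀ t : ℝ, 0 < t → Tendsto f (𝓝[<] t) (𝓝 (fl t))) {O : Set E}
    (hhyp : hitTime f O ≤ min (hitTime f (closure O)) (hitTime fl (closure O)))
    {ι : Type*} {l : Filter ι} [l.NeBot] {s : ι → ℝ} {y : ι → E} {σ : ℝ}
    (hs0 : ∀ᶠ i in l, 0 ≤ s i) (hs : Tendsto s l (𝓝 σ)) (hy : ∀ᶠ i in l, y i ∈ O)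
    (hdist : Tendsto (fun i => dist (f (s i)) (y i)) l (𝓝 0)) :
    hitTime f O ≤ ENNReal.ofReal σ := by
  have hσ : 0 ≤ σ := ge_of_tendsto hs hs0
  suffices f σ ∈ closure O ∨ fl σ ∈ closure O by
    rcases this with h | h
    · exact hhyp.trans ((min_le_left _ _).trans (hitTime_le_ofReal hσ h))
    · exact hhyp.trans ((min_le_right _ _).trans (hitTime_le_ofReal hσ h))
  by_cases hleft : (l ⊓ 𝓟 {i | s i < σ}).NeBot
  · right
    have hleft_mem : {i | s i < σ} ∈ l ⊓ 𝓟 {i | s i < σ} :=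
      mem_inf_of_right (mem_principal_self _)
    have hσ' : 0 < σ := by
      obtain ⟨i, hi0, hiσ⟩ := ((hs0.filter_mono inf_le_left).and hleft_mem).exists
      exact hi0.trans_lt hiσ
    have hfs : Tendsto (f ∘ s) (l ⊓ 𝓟 {i | s i < σ}) (𝓝 (fl σ)) :=
      (hf_l σ hσ').comp (tendsto_nhdsWithin_iff.2 ⟨hs.mono_left inf_le_left, hleft_mem⟩)
    exact mem_closure_of_tendsto (hfs.congr_dist (hdist.mono_left inf_le_left))
      (hy.filter_mono inf_le_left)
  · left
    rw [not_neBot, inf_principal_eq_bot] at hleft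
    have hright : ∀ᶠ i in l, σ ≤ s i :=
      mem_of_superset hleft fun i (hi : ¬s i < σ) => not_lt.1 hi
    exact mem_closure_of_tendsto (((hf_r σ hσ).tendsto.comp
      (tendsto_nhdsWithin_iff.2 ⟨hs, hright⟩)).congr_dist hdist) hy

end Cadlag

section CadlagMetric

variable {E : Type*} [MetricSpace E]

lemma countable_setOf_ne_leftLim {f fl : ℝ → E}
    (hf_r : ∀ t : ℝ, 0 ≤ t → ContinuousWithinAt f (Ici t) t)
    (hf_l : ∀ t : ℝ, 0 < t → Tendsto f (𝓝[<] t) (𝓝 (fl t))) :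
    {x : ℝ | 0 < x ∧ f x ≠ fl x}.Countable := by
  refine (countable_iUnion fun k : ℕ =>
    countable_setOf_le_dist_leftLim hf_r hf_l (Nat.one_div_pos_of_nat (n := k))).mono ?_
  rintro x ⟨hx, hne⟩
  obtain ⟨k, hk⟩ := exists_nat_one_div_lt (dist_pos.2 hne)
  exact mem_iUnion.2 ⟨k, hx.le, hk.le⟩

lemma exists_continuousAt_mem_Ioo {f fl : ℝ → E}
    (hf_r : ∀ t : ℝ, 0 ≤ t → ContinuousWithinAt f (Ici t) t)
    (hf_l : ∀ t : ℝ, 0 < t → Tendsto f (𝓝[<] t) (𝓝 (fl t))) {a b : ℝ} (ha : 0 ≤ a)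
    (hab : a < b) : ∃ x ∈ Ioo a b, ContinuousAt f x := by
  obtain ⟨x, hxD, hx⟩ := (countable_setOf_ne_leftLim hf_r hf_l).dense_compl ℝ
    |>.exists_mem_open isOpen_Ioo (nonempty_Ioo.2 hab)
  have hx0 : 0 < x := ha.trans_lt hx.1
  have hfx : f x = fl x := not_not.1 fun hne => hxD ⟨hx0, hne⟩
  exact ⟨x, hx, (continuousWithinAt_Ici_zero hx0.le (hf_r x hx0.le)
    (fun h => hfx ▸ hf_l x h)).continuousAt (Ici_mem_nhds hx0)⟩

end CadlagMetric

/-- The J₁ condition on `[0, T]`, with its supremum replaced by pointwise bounds. -/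
structure IsSkorokhodApprox {E : Type*} [PseudoMetricSpace E] (f : ℝ → E) (fN : ℕ → ℝ → E)
    (T : ℝ) (lam : ℕ → ℝ → ℝ) (M : ℕ → ℝ) : Prop where
  bijOn (n : ℕ) : BijOn (lam n) (Icc 0 T) (Icc 0 T)
  abs_sub_le (n : ℕ) {t : ℝ} (ht : t ∈ Icc 0 T) : |lam n t - t| ≤ M n
  dist_le (n : ℕ) {t : ℝ} (ht : t ∈ Icc 0 T) : dist (fN n t) (f (lam n t)) ≤ M n
  tendsto_zero : Tendsto M atTop (𝓝 0)

namespace IsSkorokhodApprox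

variable {E : Type*} [PseudoMetricSpace E] {f : ℝ → E} {fN : ℕ → ℝ → E} {T : ℝ}
  {lam : ℕ → ℝ → ℝ} {M : ℕ → ℝ}

lemma of_tendsto_iSup (hbij : ∀ n, BijOn (lam n) (Icc 0 T) (Icc 0 T))
    (hf : IsBounded (f '' Icc 0 T)) (hfN : ∀ n, IsBounded (fN n '' Icc 0 T))
    (hsup : Tendsto (fun n : ℕ => ⨆ t : Icc (0:ℝ) T,
      max |lam n t.1 - t.1| (dist (fN n t.1) (f (lam n t.1)))) atTop (𝓝 0)) :
    IsSkorokhodApprox f fN T lam fun n => ⨆ t : Icc (0:ℝ) T,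
      max |lam n t.1 - t.1| (dist (fN n t.1) (f (lam n t.1))) := by
  -- without a bound, the real `⨆` would be the junk value `0`
  have hbdd : ∀ n, BddAbove (range fun t : Icc (0:ℝ) T =>
      max |lam n t.1 - t.1| (dist (fN n t.1) (f (lam n t.1)))) := by
    intro n
    obtain ⟨C, hC⟩ := isBounded_iff.1 ((hfN n).union hf)
    refine ⟨max T C, ?_⟩
    rintro _ ⟨⟨t, ht⟩, rfl⟩
    have hlt := (hbij n).mapsTo ht
    refine max_le_max ?_ (hC (Or.inl (mem_image_of_mem _ ht)) (Or.inr (mem_image_of_mem _ hlt)))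
    simpa [Real.dist_eq] using Real.dist_le_of_mem_Icc hlt ht
  have hle : ∀ n, ∀ t ∈ Icc (0:ℝ) T, max |lam n t - t| (dist (fN n t) (f (lam n t))) ≤
      ⨆ t : Icc (0:ℝ) T, max |lam n t.1 - t.1| (dist (fN n t.1) (f (lam n t.1))) :=
    fun n t ht => le_ciSup (hbdd n) ⟨t, ht⟩
  exact ⟨hbij, fun n t ht => (le_max_left _ _).trans (hle n t ht),
    fun n t ht => (le_max_right _ _).trans (hle n t ht), hsup⟩

lemma eventually_hitTime_lt (happrox : IsSkorokhodApprox f fN T lam M) {O : Set E}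
    (hO : IsOpen O) {s δ : ℝ} (hs : s ∈ Icc 0 T) (hfs : f s ∈ O) (hδ : 0 < δ) :
    ∀ᶠ n in atTop, hitTime (fN n) O < ENNReal.ofReal (s + δ) := by
  obtain ⟨r, hr, hball⟩ := isOpen_iff.1 hO (f s) hfs
  filter_upwards [happrox.tendsto_zero.eventually (eventually_lt_nhds (lt_min hr hδ))]
    with n hn
  obtain ⟨t, ht, rfl⟩ := (happrox.bijOn n).surjOn hs
  have htO : fN n t ∈ O :=
    hball ((happrox.dist_le n ht).trans_lt (hn.trans_le (min_le_left _ _)))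
  have hts : t < lam n t + δ := by
    linarith [neg_abs_le (lam n t - t), happrox.abs_sub_le n ht, min_le_right r δ]
  exact (hitTime_le_ofReal ht.1 htO).trans_lt
    ((ENNReal.ofReal_lt_ofReal_iff (by linarith [ht.1])).2 hts)

lemma eventually_ofReal_le_hitTime (happrox : IsSkorokhodApprox f fN T lam M) {fl : ℝ → E}
    (hf_r : ∀ t : ℝ, 0 ≤ t → ContinuousWithinAt f (Ici t) t)
    (hf_l : ∀ t : ℝ, 0 < t → Tendsto f (𝓝[<] t) (𝓝 (fl t))) {O : Set E}
    (hhyp : hitTime f O ≤ min (hitTime f (closure O)) (hitTime fl (closure O))) {c : ℝ}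
    (hcT : c ≤ T) (hc : ENNReal.ofReal c < hitTime f O) :
    ∀ᶠ n in atTop, ENNReal.ofReal c ≤ hitTime (fN n) O := by
  by_contra hfreq
  obtain ⟨φ, hφ, hφc⟩ := extraction_of_frequently_atTop (not_eventually.1 hfreq)
  choose t ht0 htO htc using fun k => exists_lt_of_hitTime_lt (not_le.1 (hφc k))
  have htc' : ∀ k, t k ≤ c := fun k => (ENNReal.ofReal_lt_ofReal_iff'.1 (htc k)).1.le
  have htT : ∀ k, t k ∈ Icc 0 T := fun k => ⟨ht0 k, (htc' k).trans hcT⟩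
  obtain ⟨σ, -, ψ, hψ, hσ⟩ := isCompact_Icc.tendsto_subseq
    (x := fun k => lam (φ k) (t k)) fun k => (happrox.bijOn (φ k)).mapsTo (htT k)
  have hM : Tendsto (fun k => M (φ (ψ k))) atTop (𝓝 0) :=
    happrox.tendsto_zero.comp ((hφ.comp hψ).tendsto_atTop)
  have hσc : σ ≤ c := by
    refine le_of_tendsto (hσ.congr_dist (squeeze_zero (fun _ => dist_nonneg) (fun k => ?_) hM))
      (Eventually.of_forall fun k => htc' (ψ k))
    rw [Real.dist_eq]
    exact happrox.abs_sub_le _ (htT _)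
  have hle := hitTime_le_of_tendsto hf_r hf_l hhyp
    (Eventually.of_forall fun k => ((happrox.bijOn _).mapsTo (htT (ψ k))).1) hσ
    (Eventually.of_forall fun k => htO (ψ k))
    (squeeze_zero (fun _ => dist_nonneg)
      (fun k => (dist_comm _ _).trans_le (happrox.dist_le _ (htT (ψ k)))) hM)
  exact (hle.trans (ENNReal.ofReal_le_ofReal hσc)).not_gt hc

lemma tendsto_hitTime (happrox : IsSkorokhodApprox f fN T lam M) {fl : ℝ → E}
    (hf_r : ∀ t : ℝ, 0 ≤ t → ContinuousWithinAt f (Ici t) t)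
    (hf_l : ∀ t : ℝ, 0 < t → Tendsto f (𝓝[<] t) (𝓝 (fl t))) {O : Set E} (hO : IsOpen O)
    (hhyp : hitTime f O ≤ min (hitTime f (closure O)) (hitTime fl (closure O)))
    (hT : hitTime f O < ENNReal.ofReal T) :
    Tendsto (fun n => hitTime (fN n) O) atTop (𝓝 (hitTime f O)) := by
  refine tendsto_order.2 ⟨fun a ha => ?_, fun b hb => ?_⟩
  · obtain ⟨c, -, hac, hc⟩ := ENNReal.lt_iff_exists_real_btwn.1 ha
    have hcT : c ≤ T := (ENNReal.ofReal_lt_ofReal_iff'.1 (hc.trans hT)).1.le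
    filter_upwards [happrox.eventually_ofReal_le_hitTime hf_r hf_l hhyp hcT hc] with n hn
    exact hac.trans_le hn
  · obtain ⟨r, -, hr, hrb⟩ := ENNReal.lt_iff_exists_real_btwn.1 (lt_min hb hT)
    obtain ⟨s, hs0, hsO, hsr⟩ := exists_lt_of_hitTime_lt hr
    have hsr' : s < r := (ENNReal.ofReal_lt_ofReal_iff'.1 hsr).1
    have hrT : r < T := (ENNReal.ofReal_lt_ofReal_iff'.1 (hrb.trans_le (min_le_right _ _))).1
    filter_upwards [happrox.eventually_hitTime_lt hO ⟨hs0, by linarith⟩ hsO (sub_pos.2 hsr')]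
      with n hn
    rw [add_sub_cancel] at hn
    exact hn.trans (hrb.trans_le (min_le_left _ _))

lemma tendsto_apply (happrox : IsSkorokhodApprox f fN T lam M) {u : ℕ → ℝ} {x : ℝ}
    (hu : Tendsto u atTop (𝓝 x)) (hu0 : ∀ n, 0 ≤ u n) (hxT : x < T)
    (hfx : ContinuousWithinAt f (Ici 0) x) :
    Tendsto (fun n => fN n (u n)) atTop (𝓝 (f x)) := by
  have huT : ∀ᶠ n in atTop, u n ∈ Icc 0 T :=
    (hu.eventually (eventually_lt_nhds hxT)).mono fun n hn => ⟨hu0 n, hn.le⟩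
  have hlam : Tendsto (fun n => lam n (u n)) atTop (𝓝[Ici 0] x) := by
    refine tendsto_nhdsWithin_iff.2 ⟨hu.congr_dist (squeeze_zero' (by simp)
      (huT.mono fun n hn => ?_) happrox.tendsto_zero), huT.mono fun n hn => ?_⟩
    · rw [Real.dist_eq, abs_sub_comm]
      exact happrox.abs_sub_le n hn
    · exact ((happrox.bijOn n).mapsTo hn).1
  refine (hfx.tendsto.comp hlam).congr_dist
    (squeeze_zero' (by simp) (huT.mono fun n hn => ?_) happrox.tendsto_zero)
  rw [dist_comm]
  exact happrox.dist_le n hn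

end IsSkorokhodApprox

theorem hitting_time_and_value_convergence_general
    {E : Type*} [MetricSpace E] (O : Set E) (hO : IsOpen O)
    (f fl : ℝ → E) (fN : ℕ → ℝ → E)
    (hf_r : ∀ t : ℝ, 0 ≤ t → ContinuousWithinAt f (Set.Ici t) t)
    (hf_l : ∀ t : ℝ, 0 < t → Tendsto f (nhdsWithin t (Set.Iio t)) (nhds (fl t)))
    (hfN_r : ∀ n : ℕ, ∀ t : ℝ, 0 ≤ t → ContinuousWithinAt (fN n) (Set.Ici t) t)
    (hfN_l : ∀ n : ℕ, ∀ t : ℝ, 0 < t →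
      ∃ y : E, Tendsto (fN n) (nhdsWithin t (Set.Iio t)) (nhds y))
    (hJ1 : ∀ T : ℝ, 0 < T → ContinuousAt f T →
      ∃ lam : ℕ → ℝ → ℝ,
        (∀ n : ℕ, lam n 0 = 0 ∧ lam n T = T ∧
          StrictMonoOn (lam n) (Set.Icc 0 T) ∧
          ContinuousOn (lam n) (Set.Icc 0 T) ∧
          Set.BijOn (lam n) (Set.Icc 0 T) (Set.Icc 0 T)) ∧
        Tendsto (fun n : ℕ => ⨆ t : Set.Icc (0:ℝ) T,
            max |lam n t.1 - t.1| (dist (fN n t.1) (f (lam n t.1))))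
          atTop (nhds 0))
    (hhyp : hitTime f O ≤ min (hitTime f (closure O)) (hitTime fl (closure O)))
    (hfin : hitTime f O < ⊤)
    (hcont : f ((hitTime f O).toReal) = fl ((hitTime f O).toReal)) :
    (∀ᶠ n in atTop, hitTime (fN n) O < ⊤)
    ∧ Tendsto (fun n : ℕ =>
          ((hitTime (fN n) O).toReal, fN n ((hitTime (fN n) O).toReal)))
        atTop (nhds ((hitTime f O).toReal, f ((hitTime f O).toReal))) := by
  set τ := (hitTime f O).toReal
  have hτ0 : 0 ≤ τ := ENNReal.toReal_nonneg
  have hfτ : ContinuousWithinAt f (Ici 0) τ :=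
    continuousWithinAt_Ici_zero hτ0 (hf_r τ hτ0) fun h => hcont ▸ hf_l τ h
  obtain ⟨T, ⟨hτT, -⟩, hT⟩ := exists_continuousAt_mem_Ioo hf_r hf_l hτ0 (lt_add_one τ)
  obtain ⟨lam, hlam, hsup⟩ := hJ1 T (hτ0.trans_lt hτT) hT
  have happrox := IsSkorokhodApprox.of_tendsto_iSup (fun n => (hlam n).2.2.2.2)
    (isBounded_image_Icc_of_cadlag hf_r (fun t ht => ⟨fl t, hf_l t ht⟩) T)
    (fun n => isBounded_image_Icc_of_cadlag (hfN_r n) (hfN_l n) T) hsup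
  have hτT' : hitTime f O < ENNReal.ofReal T := by
    rwa [← ENNReal.ofReal_toReal hfin.ne, ENNReal.ofReal_lt_ofReal_iff (hτ0.trans_lt hτT)]
  have hconv := happrox.tendsto_hitTime hf_r hf_l hO hhyp hτT'
  have hconvR := (ENNReal.tendsto_toReal hfin.ne).comp hconv
  exact ⟨hconv.eventually_lt_const hfin, hconvR.prodMk_nhds
    (happrox.tendsto_apply hconvR (fun _ => ENNReal.toReal_nonneg) hτT hfτ)⟩

/-- If moreover `T_O(f) < ∞` and `f` is continuous at `T_O(f)` (i.e.
`f(T_O(f)) = f(T_O(f)−)`), then `T_O(f_n) < ∞` for all large `n` and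
`(T_O(f_n), f_n(T_O(f_n))) → (T_O(f), f(T_O(f)))` in `[0,∞) × E`. -/
theorem hitting_time_and_value_convergence
    {E : Type*} [MetricSpace E] (O : Set E) (hO : IsOpen O)
    (f fl : ℝ → E) (fN : ℕ → ℝ → E)
    (hf_r : ∀ t : ℝ, 0 ≤ t → ContinuousWithinAt f (Set.Ici t) t)
    (hf_l : ∀ t : ℝ, 0 < t → Tendsto f (nhdsWithin t (Set.Iio t)) (nhds (fl t)))
    (hfl0 : fl 0 = f 0)
    (hfN_r : ∀ n : ℕ, ∀ t : ℝ, 0 ≤ t → ContinuousWithinAt (fN n) (Set.Ici t) t)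
    (hfN_l : ∀ n : ℕ, ∀ t : ℝ, 0 < t →
      ∃ y : E, Tendsto (fN n) (nhdsWithin t (Set.Iio t)) (nhds y))
    (hJ1 : ∀ T : ℝ, 0 < T → ContinuousAt f T →
      ∃ lam : ℕ → ℝ → ℝ,
        (∀ n : ℕ, lam n 0 = 0 ∧ lam n T = T ∧
          StrictMonoOn (lam n) (Set.Icc 0 T) ∧
          ContinuousOn (lam n) (Set.Icc 0 T) ∧
          Set.BijOn (lam n) (Set.Icc 0 T) (Set.Icc 0 T)) ∧
        Tendsto (fun n : ℕ => ⨆ t : Set.Icc (0:ℝ) T,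
            max |lam n t.1 - t.1| (dist (fN n t.1) (f (lam n t.1))))
          atTop (nhds 0))
    (hhyp : hitTime f O ≤ min (hitTime f (closure O)) (hitTime fl (closure O)))
    (hfin : hitTime f O < ⊤)
    (hcont : f ((hitTime f O).toReal) = fl ((hitTime f O).toReal)) :
    (∀ᶠ n in atTop, hitTime (fN n) O < ⊤)
    ∧ Tendsto (fun n : ℕ =>
          ((hitTime (fN n) O).toReal, fN n ((hitTime (fN n) O).toReal)))
        atTop (nhds ((hitTime f O).toReal, f ((hitTime f O).toReal))) :=
  hitting_time_and_value_convergence_general O hO f fl fN hf_r hf_l hfN_r hfN_l hJ1 hhyp hfin hcont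
end

section
/- Let f(s) = s + c(1−s)^{1+α} and g(s) = 1 − d(1−s)^α for s ∈ (0,1) with α ∈ (0,1), 0 < d < 1, 0 < c(1+α) < 1, and for 0 < p < 1 let g_p(s) = 1 − p + p·s·g(s). Then f, g and g_p are probability generating functions of distributions on ℕ, i.e., each is given by a power series in s with nonnegative coefficients summing to 1. -/
/-!
The binomial series `(1 - s) ^ a = ∑ (-1)ⁿ (a choose n) sⁿ` has coefficients of a single sign
from the index `⌊a⌋ + 1` on, since consecutive coefficients differ by the factor
`(n - a) / (n + 1)`. With `a = α` this makes the coefficients `1 - d`, `-d (-1)ⁿ (α choose n)`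
of `g` nonnegative, and with `a = 1 + α` those of `f`, whose first two are `c` and
`1 - c (1 + α)`. Nonnegative coefficients of a power series sum to its left limit at `1`
(monotone convergence and Abel's theorem), and both limits are `1`. Finally `g_p` mixes the
point mass at `0` with the law of `1 + X`, where `X` has generating function `g`.
-/

open Filter Topology Set

/-- `h` is a probability generating function of a distribution on `ℕ`:
it is given on `(0,1)` by a power series with nonnegative coefficients summing to 1. -/
def IsPGF (h : ℝ → ℝ) : Prop :=
  ∃ a : ℕ → ℝ, (∀ n, 0 ≤ a n) ∧ HasSum a 1 ∧
    ∀ s ∈ Set.Ioo (0:ℝ) 1, HasSum (fun n => a n * s ^ n) (h s)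

namespace Ring

open Polynomial in
theorem choose_succ_right_eq {K : Type*} [Field K] [CharZero K] (a : K) (n : ℕ) :
    choose a (n + 1) * (n + 1) = choose a n * (a - n) := by
  simp only [choose_eq_smul, descPochhammer_succ_right, smeval_mul, smul_eq_mul,
    Nat.factorial_succ, smeval_sub, smeval_X, smeval_natCast]
  push_cast
  field_simp
  simp

variable {K : Type*} [Field K] [LinearOrder K] [IsStrictOrderedRing K]

theorem choose_nonneg_of_le_add_one {a : K} {n : ℕ} (h : (n : K) ≤ a + 1) :
    0 ≤ choose a n := by
  induction n with
  | zero => simp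
  | succ n ih =>
    push_cast at h
    have : 0 ≤ choose a (n + 1) * (n + 1) :=
      (choose_succ_right_eq a n) ▸ mul_nonneg (ih (by linarith)) (by linarith)
    exact nonneg_of_mul_nonneg_left this (by positivity)

theorem neg_one_pow_mul_choose_nonneg {a : K} {k n : ℕ} (hka : k ≤ a) (hak : a ≤ k + 1)
    (hkn : k < n) : 0 ≤ (-1) ^ (n + k + 1) * choose a n := by
  induction n, hkn using Nat.le_induction with
  | base =>
    rw [show k + 1 + k + 1 = 2 * (k + 1) by omega, pow_mul, neg_one_sq, one_pow, one_mul]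
    exact choose_nonneg_of_le_add_one (by push_cast; linarith)
  | succ n hn ih =>
    have hn' : a ≤ n := hak.trans (by exact_mod_cast hn)
    have hmul : (-1) ^ (n + 1 + k + 1) * choose a (n + 1) * (n + 1)
        = (-1) ^ (n + k + 1) * choose a n * (n - a) := by
      rw [mul_assoc, choose_succ_right_eq]
      ring
    have : 0 ≤ (-1) ^ (n + 1 + k + 1) * choose a (n + 1) * (n + 1) :=
      hmul ▸ mul_nonneg ih (by linarith)
    exact nonneg_of_mul_nonneg_left this (by positivity)

end Ring

theorem Real.hasSum_choose_mul_pow (a : ℝ) {x : ℝ} (hx : |x| < 1) :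
    HasSum (fun n => Ring.choose a n * x ^ n) ((1 + x) ^ a) := by
  have := (one_add_rpow_hasFPowerSeriesOnBall_zero (a := a)).hasSum (y := x)
    (by simpa [Metric.mem_eball, edist_dist] using hx)
  simpa [binomialSeries_apply, -FormalMultilinearSeries.apply_eq_prod_smul_coeff, mul_comm]
    using this

theorem Real.hasSum_neg_one_pow_mul_choose_mul_pow (a : ℝ) {s : ℝ} (hs : |s| < 1) :
    HasSum (fun n => (-1) ^ n * Ring.choose a n * s ^ n) ((1 - s) ^ a) := by
  have := hasSum_choose_mul_pow a (x := -s) (by rwa [abs_neg])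
  rw [← sub_eq_add_neg] at this
  exact this.congr_fun fun n => by rw [neg_pow]; ring

theorem Real.tendsto_one_sub_rpow_nhdsLT_one {a : ℝ} (ha : 0 < a) :
    Tendsto (fun s : ℝ => (1 - s) ^ a) (𝓝[<] 1) (𝓝 0) := by
  have : ContinuousAt (fun s : ℝ => (1 - s) ^ a) 1 := by fun_prop (disch := exact Or.inr ha.le)
  simpa [Real.zero_rpow ha.ne'] using this.tendsto.mono_left nhdsWithin_le_nhds

namespace IsPGF

theorem congr {φ ψ : ℝ → ℝ} (hφ : IsPGF φ) (h : ∀ s ∈ Ioo (0 : ℝ) 1, φ s = ψ s) : IsPGF ψ := by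
  obtain ⟨a, ha, ha1, hφa⟩ := hφ
  exact ⟨a, ha, ha1, fun s hs => h s hs ▸ hφa s hs⟩

theorem of_tendsto {h : ℝ → ℝ} (a : ℕ → ℝ) (ha : ∀ n, 0 ≤ a n)
    (hh : ∀ s ∈ Ioo (0 : ℝ) 1, HasSum (fun n => a n * s ^ n) (h s))
    (hlim : Tendsto h (𝓝[<] 1) (𝓝 1)) : IsPGF h := by
  have hIoo : ∀ᶠ s in 𝓝[<] (1 : ℝ), s ∈ Ioo (0 : ℝ) 1 := Ioo_mem_nhdsLT zero_lt_one
  have hpartial : ∀ N, ∑ n ∈ Finset.range N, a n ≤ 1 := by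
    intro N
    have hcont : Continuous fun s : ℝ => ∑ n ∈ Finset.range N, a n * s ^ n := by fun_prop
    refine le_of_tendsto_of_tendsto
      (by simpa using hcont.continuousAt.tendsto.mono_left (nhdsWithin_le_nhds (a := 1))) hlim ?_
    filter_upwards [hIoo] with s hs
    exact sum_le_hasSum _ (fun n _ => mul_nonneg (ha n) (pow_nonneg hs.1.le n)) (hh s hs)
  have hsum : Summable a := summable_of_sum_range_le ha hpartial
  have habel := Real.tendsto_tsum_powerSeries_nhdsWithin_lt hsum.hasSum.tendsto_sum_nat
  have hlim' : Tendsto (fun s => ∑' n, a n * s ^ n) (𝓝[<] 1) (𝓝 1) :=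
    hlim.congr' (by filter_upwards [hIoo] with s hs using (hh s hs).tsum_eq.symm)
  exact ⟨a, ha, tendsto_nhds_unique habel hlim' ▸ hsum.hasSum, hh⟩

theorem id_mul {g : ℝ → ℝ} (hg : IsPGF g) : IsPGF fun s => s * g s := by
  obtain ⟨a, ha, ha1, hga⟩ := hg
  refine ⟨fun n => if n = 0 then 0 else a (n - 1), fun n => ?_, ?_, ?_⟩
  · dsimp only
    split_ifs
    exacts [le_rfl, ha _]
  · rw [← hasSum_nat_add_iff' 1]
    simpa using ha1
  · intro s hs
    rw [← hasSum_nat_add_iff' 1]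
    simpa [pow_succ, mul_comm, mul_left_comm] using (hga s hs).mul_left s

theorem mix {g h : ℝ → ℝ} (hg : IsPGF g) (hh : IsPGF h) {p : ℝ} (hp0 : 0 ≤ p) (hp1 : p ≤ 1) :
    IsPGF fun s => (1 - p) * g s + p * h s := by
  obtain ⟨a, ha, ha1, hga⟩ := hg
  obtain ⟨b, hb, hb1, hhb⟩ := hh
  refine ⟨fun n => (1 - p) * a n + p * b n, fun n => by have := ha n; have := hb n; positivity,
    by simpa using (ha1.mul_left (1 - p)).add (hb1.mul_left p), fun s hs => ?_⟩
  simpa [add_mul, mul_assoc] using ((hga s hs).mul_left (1 - p)).add ((hhb s hs).mul_left p)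

end IsPGF

theorem isPGF_one : IsPGF fun _ => 1 := by
  refine IsPGF.of_tendsto (fun n => if n = 0 then 1 else 0) (fun n => by positivity)
    (fun s _ => (hasSum_ite_eq 0 (1 : ℝ)).congr_fun fun n => ?_) tendsto_const_nhds
  split_ifs with hn <;> simp [hn]

theorem isPGF_one_sub_mul_one_sub_rpow {α d : ℝ} (hα0 : 0 < α) (hα1 : α ≤ 1)
    (hd0 : 0 ≤ d) (hd1 : d ≤ 1) : IsPGF fun s => 1 - d * (1 - s) ^ α := by
  refine IsPGF.of_tendsto (fun n => (if n = 0 then 1 else 0) - d * ((-1) ^ n * Ring.choose α n))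
    (fun n => ?_) (fun s hs => ?_) ?_
  · rcases n with _ | n
    · simpa using hd1
    · have hsign := Ring.neg_one_pow_mul_choose_nonneg (k := 0) (n := n + 1)
        (by simpa using hα0.le) (by simpa using hα1) n.succ_pos
      rw [show (-1 : ℝ) ^ (n + 1 + 0 + 1) = -(-1) ^ (n + 1) by ring, neg_mul] at hsign
      rw [if_neg n.succ_ne_zero]
      linarith [mul_nonneg hd0 hsign]
  · refine ((hasSum_ite_eq 0 (1 : ℝ)).sub
      ((Real.hasSum_neg_one_pow_mul_choose_mul_pow α
        (abs_lt.2 ⟨by linarith [hs.1], hs.2⟩)).mul_left d)).congr_fun fun n => ?_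
    split_ifs with hn <;> simp [hn, mul_assoc]
  · simpa using tendsto_const_nhds.sub ((Real.tendsto_one_sub_rpow_nhdsLT_one hα0).const_mul d)

theorem isPGF_id_add_mul_one_sub_rpow {β c : ℝ} (hβ1 : 1 ≤ β) (hβ2 : β ≤ 2)
    (hc0 : 0 ≤ c) (hcβ : c * β ≤ 1) : IsPGF fun s => s + c * (1 - s) ^ β := by
  refine IsPGF.of_tendsto (fun n => (if n = 1 then 1 else 0) + c * ((-1) ^ n * Ring.choose β n))
    (fun n => ?_) (fun s hs => ?_) ?_
  · match n with
    | 0 => simpa using hc0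
    | 1 => simp; linarith
    | n + 2 =>
      have hsign := Ring.neg_one_pow_mul_choose_nonneg (k := 1) (n := n + 2)
        (by simpa using hβ1) (by norm_num; linarith) (by omega)
      rw [show (-1 : ℝ) ^ (n + 2 + 1 + 1) = (-1) ^ (n + 2) by ring] at hsign
      rw [if_neg (by omega), zero_add]
      exact mul_nonneg hc0 hsign
  · refine ((hasSum_ite_eq 1 s).add
      ((Real.hasSum_neg_one_pow_mul_choose_mul_pow β
        (abs_lt.2 ⟨by linarith [hs.1], hs.2⟩)).mul_left c)).congr_fun fun n => ?_
    split_ifs with hn <;> simp [hn, add_mul, mul_assoc]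
  · simpa using (tendsto_id.mono_left nhdsWithin_le_nhds).add
      ((Real.tendsto_one_sub_rpow_nhdsLT_one (by linarith)).const_mul c)

/-- `f(s) = s + c(1−s)^{1+α}`, `g(s) = 1 − d(1−s)^α` and
`g_p(s) = 1 − p + p·s·g(s)` are probability generating functions. -/
theorem pgf_examples (α c d p : ℝ)
    (hα : α ∈ Set.Ioo (0:ℝ) 1) (hd : 0 < d ∧ d < 1)
    (hc : 0 < c * (1 + α) ∧ c * (1 + α) < 1) (hp : 0 < p ∧ p < 1)
    (f g gp : ℝ → ℝ)
    (hf : ∀ s ∈ Set.Ioo (0:ℝ) 1, f s = s + c * (1 - s) ^ (1 + α))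
    (hg : ∀ s ∈ Set.Ioo (0:ℝ) 1, g s = 1 - d * (1 - s) ^ α)
    (hgp : ∀ s ∈ Set.Ioo (0:ℝ) 1, gp s = 1 - p + p * s * g s) :
    IsPGF f ∧ IsPGF g ∧ IsPGF gp := by
  obtain ⟨hα0, hα1⟩ := hα
  have hc0 : 0 ≤ c := (pos_of_mul_pos_left hc.1 (by linarith)).le
  have hpgf_f : IsPGF f :=
    (isPGF_id_add_mul_one_sub_rpow (by linarith) (by linarith) hc0 hc.2.le).congr
      fun s hs => (hf s hs).symm
  have hpgf_g : IsPGF g :=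
    (isPGF_one_sub_mul_one_sub_rpow hα0 hα1.le hd.1.le hd.2.le).congr fun s hs => (hg s hs).symm
  refine ⟨hpgf_f, hpgf_g, (isPGF_one.mix hpgf_g.id_mul hp.1.le hp.2.le).congr fun s hs => ?_⟩
  rw [hgp s hs]
  ring
end
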